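/- arXiv:2007.08660 — 5 statements merged into one kernel-verified Lean document; each statement's English description precedes it below -/
import Mathlib

section
/- For every real γ > 0 and every natural number n, the partial sum of the memory function ∑_{m=0}^{n} ψ(γ, m) is strictly positive. -/
open Finset Filter

/-- Generalized binomial coefficient `C(x, m) = x (x-1) ⋯ (x-m+1) / m!`. -/
noncomputable def genBinom (x : ℝ) (m : ℕ) : ℝ :=
  (descPochhammer ℝ m).eval x / m.factorial

/-- Memory function `ψ(γ, m) = (-1)^m ⬝ C(1-γ, m)`. -/
noncomputable def psi (γ : ℝ) (m : ℕ) : ℝ :=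
  (-1) ^ m * genBinom (1 - γ) m

lemma psi_sum_eq (γ : ℝ) (n : ℕ) :
    ∑ m ∈ Finset.range (n + 1), psi γ m
      = (-1) ^ n * (descPochhammer ℝ n).eval (-γ) / n.factorial := by
  induction n with
  | zero => simp [psi, genBinom]
  | succ n ih =>
    rw [Finset.sum_range_succ, ih]
    have hlast : (descPochhammer ℝ (n + 1)).eval (1 - γ)
        = (1 - γ) * (descPochhammer ℝ n).eval (-γ) := by
      rw [descPochhammer_succ_left]
      simp [sub_sub]
    have hsucc : (descPochhammer ℝ (n + 1)).eval (-γ)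
        = (descPochhammer ℝ n).eval (-γ) * (-γ - n) := descPochhammer_succ_eval n (-γ)
    rw [psi, genBinom, hlast, hsucc]
    have hn : (n.factorial : ℝ) ≠ 0 := by positivity
    have hn1 : ((n+1).factorial : ℝ) ≠ 0 := by positivity
    rw [Nat.factorial_succ]
    push_cast
    field_simp
    ring
  
theorem psi_partial_sum_pos (γ : ℝ) (hγ : 0 < γ) (n : ℕ) :
    0 < ∑ m ∈ Finset.range (n + 1), psi γ m := by
  rw [psi_sum_eq]
  have h : (-1 : ℝ) ^ n * (descPochhammer ℝ n).eval (-γ)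
      = (ascPochhammer ℝ n).eval γ := by
    have := ascPochhammer_eval_neg_eq_descPochhammer (R := ℝ) (-γ) n
    rw [neg_neg] at this
    rw [this]
  rw [h]
  have := ascPochhammer_pos n γ hγ
  positivity
end

section
/- For every real γ with 0 < γ < 2, the stability bound B₁(γ, n) = 2 / (∑_{m=0}^{n} (−1)^m ψ(γ, m)) converges to B₂(γ) = 2^γ as n → ∞. -/
open Finset Filter

/-!
Put `x = 1 - γ ∈ (-1, 1]` and `S_N(t) = ∑_{m ≤ N} C(x, m) tᵐ`, so that the denominator of `B₁(γ, N)`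
is `S_N(1)`. The binomial series solves `(1 + t) S' = x S`; its truncation fails this only by the
single term `-(N + 1) C(x, N + 1) t^N`. Differentiating `S_N(t) (1 + t)^(-x)` and integrating over
`[0, 1]` therefore gives `|S_N(1) 2^(-x) - 1| ≤ |C(x, N + 1)|`. The coefficients tend to `0`, since
`|C(x, m + 1)| = |C(x, m)| (1 - (1 + x)/(m + 1))` for `m ≥ x` and the harmonic series diverges.
Hence `S_N(1) → 2^x` and `B₁(γ, N) → 2 / 2^(1 - γ) = 2^γ`.
-/

lemma tendsto_zero_of_le_mul_one_sub {u r : ℕ → ℝ} (hu : ∀ k, 0 ≤ u k)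
    (hstep : ∀ k, u (k + 1) ≤ u k * (1 - r k))
    (hr : Tendsto (fun k => ∑ j ∈ range k, r j) atTop atTop) :
    Tendsto u atTop (nhds 0) := by
  have hbound : ∀ k, u k ≤ u 0 * Real.exp (-∑ j ∈ range k, r j) := by
    intro k
    induction k with
    | zero => simp
    | succ k ih =>
      calc u (k + 1) ≤ u k * Real.exp (-r k) :=
            (hstep k).trans <| mul_le_mul_of_nonneg_left
              (by linarith [Real.add_one_le_exp (-r k)]) (hu k)
        _ ≤ u 0 * Real.exp (-∑ j ∈ range k, r j) * Real.exp (-r k) :=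
            mul_le_mul_of_nonneg_right ih (Real.exp_pos _).le
        _ = u 0 * Real.exp (-∑ j ∈ range (k + 1), r j) := by
            rw [mul_assoc, ← Real.exp_add, sum_range_succ, neg_add]
  have hexp : Tendsto (fun k => u 0 * Real.exp (-∑ j ∈ range k, r j)) atTop (nhds 0) := by
    simpa using (Real.tendsto_exp_atBot.comp (tendsto_neg_atTop_atBot.comp hr)).const_mul (u 0)
  exact squeeze_zero hu hbound hexp

lemma tendsto_sum_range_one_div_add_two_atTop :
    Tendsto (fun k => ∑ j ∈ range k, 1 / ((j : ℝ) + 2)) atTop atTop := by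
  refine (not_summable_iff_tendsto_nat_atTop_of_nonneg fun j => by positivity).1 ?_
  have := (summable_nat_add_iff 2).not.2 Real.not_summable_one_div_natCast
  simpa [add_comm] using this

lemma genBinom_zero (x : ℝ) : genBinom x 0 = 1 := by
  simp [genBinom]

lemma genBinom_one (x : ℝ) : genBinom x 1 = x := by
  simp [genBinom]

lemma genBinom_succ (x : ℝ) (m : ℕ) :
    ((m : ℝ) + 1) * genBinom x (m + 1) = genBinom x m * (x - m) := by
  rw [genBinom, genBinom, descPochhammer_succ_eval, Nat.factorial_succ]
  push_cast
  field_simp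

lemma abs_genBinom_succ {x : ℝ} {m : ℕ} (hm : x ≤ m) :
    |genBinom x (m + 1)| = |genBinom x m| * (1 - (1 + x) / ((m : ℝ) + 1)) := by
  have hm1 : (0 : ℝ) < m + 1 := by positivity
  have hrec : genBinom x (m + 1) = genBinom x m * ((x - m) / (m + 1)) := by
    rw [mul_div_assoc', eq_div_iff hm1.ne', ← genBinom_succ, mul_comm]
  rw [hrec, abs_mul, abs_div, abs_of_nonpos (sub_nonpos.2 hm), abs_of_pos hm1]
  congr 1
  field_simp
  ring

lemma tendsto_genBinom_zero {x : ℝ} (hx1 : -1 < x) (hx2 : x ≤ 1) :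
    Tendsto (genBinom x) atTop (nhds 0) := by
  rw [← tendsto_add_atTop_iff_nat 1, tendsto_zero_iff_abs_tendsto_zero]
  refine tendsto_zero_of_le_mul_one_sub (u := fun k => |genBinom x (k + 1)|)
    (r := fun k => (1 + x) / ((k : ℝ) + 2)) (fun k => abs_nonneg _) (fun k => ?_) ?_
  · have hk : x ≤ ((k + 1 : ℕ) : ℝ) := by push_cast; linarith [(k.cast_nonneg : (0 : ℝ) ≤ k)]
    exact (abs_genBinom_succ hk).le.trans_eq (by push_cast; ring)
  · refine (tendsto_sum_range_one_div_add_two_atTop.const_mul_atTop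
      (by linarith : 0 < 1 + x)).congr fun k => ?_
    simp only [mul_sum, mul_one_div]

noncomputable def binomPartialSum (x : ℝ) (N : ℕ) (t : ℝ) : ℝ :=
  ∑ m ∈ range (N + 1), genBinom x m * t ^ m

lemma binomPartialSum_deriv_identity (x t : ℝ) (N : ℕ) :
    (1 + t) * (∑ m ∈ range (N + 1), genBinom x m * (m * t ^ (m - 1)))
      - x * binomPartialSum x N t = -(((N : ℝ) + 1) * genBinom x (N + 1) * t ^ N) := by
  induction N with
  | zero => simp [binomPartialSum, genBinom_zero, genBinom_one]
  | succ N ih =>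
    rw [binomPartialSum] at ih ⊢
    rw [sum_range_succ (fun m => genBinom x m * (m * t ^ (m - 1))) (N + 1),
      sum_range_succ (fun m => genBinom x m * t ^ m) (N + 1)]
    have hrec := genBinom_succ x (N + 1)
    push_cast at hrec ⊢
    linear_combination ih + t ^ (N + 1) * hrec

lemma hasDerivAt_binomPartialSum_mul_rpow (x : ℝ) (N : ℕ) {t : ℝ} (ht : -1 < t) :
    HasDerivAt (fun s => binomPartialSum x N s * (1 + s) ^ (-x))
      (-(((N : ℝ) + 1) * genBinom x (N + 1)) * (t ^ N * (1 + t) ^ (-x - 1))) t := by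
  have hpos : 0 < 1 + t := by linarith
  have hsum : HasDerivAt (binomPartialSum x N)
      (∑ m ∈ range (N + 1), genBinom x m * (m * t ^ (m - 1))) t :=
    HasDerivAt.fun_sum fun m _ => (hasDerivAt_pow m t).const_mul (genBinom x m)
  have hrpow : HasDerivAt (fun s => (1 + s) ^ (-x)) (-x * (1 + t) ^ (-x - 1)) t := by
    simpa using ((hasDerivAt_id t).const_add 1).rpow_const (p := -x) (Or.inl hpos.ne')
  refine (hsum.mul hrpow).congr_deriv ?_
  have hsplit : (1 + t) ^ (-x) = (1 + t) ^ (-x - 1) * (1 + t) := by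
    rw [← Real.rpow_add_one hpos.ne', sub_add_cancel]
  rw [hsplit]
  linear_combination (1 + t) ^ (-x - 1) * binomPartialSum_deriv_identity x t N

lemma binomPartialSum_one_mul_rpow_sub_one (x : ℝ) (N : ℕ) :
    binomPartialSum x N 1 * 2 ^ (-x) - 1
      = -(((N : ℝ) + 1) * genBinom x (N + 1)) * ∫ t in (0 : ℝ)..1, t ^ N * (1 + t) ^ (-x - 1) := by
  have hIcc : Set.uIcc (0 : ℝ) 1 = Set.Icc 0 1 := Set.uIcc_of_le zero_le_one
  have hcont : ContinuousOn (fun t : ℝ => t ^ N * (1 + t) ^ (-x - 1)) (Set.uIcc 0 1) := by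
    rw [hIcc]
    exact (continuousOn_pow N).mul <| (continuousOn_const.add continuousOn_id).rpow_const
      fun t ht => Or.inl (show (1 : ℝ) + t ≠ 0 by linarith [ht.1])
  rw [← intervalIntegral.integral_const_mul, intervalIntegral.integral_eq_sub_of_hasDerivAt
    (fun t ht => hasDerivAt_binomPartialSum_mul_rpow x N (by rw [hIcc] at ht; linarith [ht.1]))
    (hcont.intervalIntegrable.const_mul _)]
  simp [binomPartialSum, sum_range_succ', genBinom_zero, one_add_one_eq_two]

lemma abs_integral_pow_mul_one_add_rpow_le {x : ℝ} (hx : -1 ≤ x) (N : ℕ) :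
    |∫ t in (0 : ℝ)..1, t ^ N * (1 + t) ^ (-x - 1)| ≤ 1 / ((N : ℝ) + 1) := by
  have hle : |∫ t in (0 : ℝ)..1, t ^ N * (1 + t) ^ (-x - 1)| ≤ ∫ t in (0 : ℝ)..1, t ^ N := by
    rw [← Real.norm_eq_abs]
    refine intervalIntegral.norm_integral_le_of_norm_le zero_le_one
      (MeasureTheory.ae_of_all _ fun t ht => ?_)
      ((continuous_pow N).intervalIntegrable (μ := MeasureTheory.volume) 0 1)
    have ht : 0 < t := ht.1
    rw [Real.norm_eq_abs, abs_mul, abs_of_pos (pow_pos ht N), abs_of_pos (by positivity)]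
    exact mul_le_of_le_one_right (by positivity)
      (Real.rpow_le_one_of_one_le_of_nonpos (by linarith) (by linarith))
  simpa [integral_pow] using hle

lemma abs_binomPartialSum_one_mul_rpow_sub_one_le {x : ℝ} (hx : -1 ≤ x) (N : ℕ) :
    |binomPartialSum x N 1 * 2 ^ (-x) - 1| ≤ |genBinom x (N + 1)| := by
  have hN : (0 : ℝ) < N + 1 := by positivity
  rw [binomPartialSum_one_mul_rpow_sub_one, abs_mul, abs_neg, abs_mul, abs_of_pos hN]
  calc (N + 1) * |genBinom x (N + 1)| * |∫ t in (0 : ℝ)..1, t ^ N * (1 + t) ^ (-x - 1)|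
      ≤ (N + 1) * |genBinom x (N + 1)| * (1 / (N + 1)) := by
        gcongr
        exact abs_integral_pow_mul_one_add_rpow_le hx N
    _ = |genBinom x (N + 1)| := by field_simp

lemma tendsto_binomPartialSum_one {x : ℝ} (hx1 : -1 < x) (hx2 : x ≤ 1) :
    Tendsto (fun N => binomPartialSum x N 1) atTop (nhds (2 ^ x)) := by
  have herr : Tendsto (fun N => binomPartialSum x N 1 * 2 ^ (-x) - 1) atTop (nhds 0) :=
    squeeze_zero_norm (abs_binomPartialSum_one_mul_rpow_sub_one_le hx1.le)
      (by simpa using ((tendsto_add_atTop_iff_nat 1).2 (tendsto_genBinom_zero hx1 hx2)).abs)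
  have h2 : (2 : ℝ) ^ (-x) * 2 ^ x = 1 := by
    rw [← Real.rpow_add two_pos, neg_add_cancel, Real.rpow_zero]
  refine (((herr.add_const 1).mul_const (2 ^ x)).congr fun N => ?_).trans (by simp)
  rw [sub_add_cancel, mul_assoc, h2, mul_one]

lemma neg_one_pow_mul_psi (γ : ℝ) (m : ℕ) : (-1 : ℝ) ^ m * psi γ m = genBinom (1 - γ) m := by
  rw [psi, ← mul_assoc, ← mul_pow]
  norm_num

theorem B1_tendsto_B2 (γ : ℝ) (hγ0 : 0 < γ) (hγ2 : γ < 2) :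
    Filter.Tendsto
      (fun n : ℕ => 2 / ∑ m ∈ Finset.range (n + 1), (-1 : ℝ) ^ m * psi γ m)
      Filter.atTop (nhds ((2 : ℝ) ^ γ)) := by
  have hsum := tendsto_binomPartialSum_one (x := 1 - γ) (by linarith) (by linarith)
  have hlim : (2 : ℝ) / 2 ^ (1 - γ) = 2 ^ γ := by
    rw [Real.rpow_sub two_pos, Real.rpow_one, div_div_cancel₀ two_ne_zero]
  rw [← hlim]
  refine (tendsto_const_nhds.div hsum (by positivity)).congr fun n => ?_
  simp [binomPartialSum, neg_one_pow_mul_psi]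
end

section
/- Let γ, α, β, k_c, k_d be real numbers, let Δt, Δx, Δy be positive reals, let σ be a nonzero complex number, and let n be a natural number. Define the grid function u^p_{j,l} = σ^p · e^{i k_c j Δx} · e^{i k_d l Δy} for p ∈ ℕ and j, l ∈ ℤ. Then u satisfies the full fractional FTCS scheme at step n, namely u^{n+1}_{j,l} − u^n_{j,l} = Δt^γ ∑_{m=0}^{n} ψ(γ, m) [ (α/Δx²)(u^{n−m}_{j+1,l} − 2u^{n−m}_{j,l} + u^{n−m}_{j−1,l}) + (β/Δy²)(u^{n−m}_{j,l+1} − 2u^{n−m}_{j,l} + u^{n−m}_{j,l−1}) ] for all j, l ∈ ℤ, if and only if σ satisfies the amplification equation σ^{n+1} − σ^n + Δt^γ ( (4α/Δx²) sin²(k_c Δx/2) + (4β/Δy²) sin²(k_d Δy/2) ) ∑_{m=0}^{n} ψ(γ, m) σ^{n−m} = 0. -/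
open Finset Filter

lemma exp_second_diff (θ : ℝ) :
    Complex.exp (Complex.I * θ) - 2 + Complex.exp (-(Complex.I * θ)) =
      ((-(4 * Real.sin (θ / 2) ^ 2) : ℝ) : ℂ) := by
  have h1 : Complex.I * (θ : ℂ) = (θ : ℂ) * Complex.I := by ring
  rw [h1, Complex.exp_mul_I, ← neg_mul, Complex.exp_mul_I, Complex.cos_neg, Complex.sin_neg]
  have hs : Real.cos θ = 1 - 2 * Real.sin (θ / 2) ^ 2 := by
    have h2 : θ = 2 * (θ / 2) := by ring
    rw [h2, Real.cos_two_mul, Real.cos_sq']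
    ring
  rw [← Complex.ofReal_cos, hs]
  push_cast
  ring

set_option maxHeartbeats 1000000 in
theorem vonNeumann_substitution (γ α β kc kd : ℝ) (Δt Δx Δy : ℝ)
    (hΔt : 0 < Δt) (hΔx : 0 < Δx) (hΔy : 0 < Δy)
    (σ : ℂ) (hσ : σ ≠ 0) (n : ℕ)
    (u : ℕ → ℤ → ℤ → ℂ)
    (hu : ∀ (p : ℕ) (j l : ℤ), u p j l =
      σ ^ p * Complex.exp (Complex.I * kc * (j : ℂ) * Δx)
            * Complex.exp (Complex.I * kd * (l : ℂ) * Δy)) :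
    (∀ j l : ℤ,
      u (n + 1) j l - u n j l =
        ((Δt ^ γ : ℝ) : ℂ) * ∑ m ∈ Finset.range (n + 1), (psi γ m : ℂ) *
          (((α / Δx ^ 2 : ℝ) : ℂ) *
              (u (n - m) (j + 1) l - 2 * u (n - m) j l + u (n - m) (j - 1) l)
            + ((β / Δy ^ 2 : ℝ) : ℂ) *
              (u (n - m) j (l + 1) - 2 * u (n - m) j l + u (n - m) j (l - 1))))
    ↔
    σ ^ (n + 1) - σ ^ n +
      ((Δt ^ γ * (4 * α / Δx ^ 2 * Real.sin (kc * Δx / 2) ^ 2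
          + 4 * β / Δy ^ 2 * Real.sin (kd * Δy / 2) ^ 2) : ℝ) : ℂ) *
        ∑ m ∈ Finset.range (n + 1), (psi γ m : ℂ) * σ ^ (n - m) = 0 := by
  have key : ∀ j l : ℤ,
      (u (n + 1) j l - u n j l =
        ((Δt ^ γ : ℝ) : ℂ) * ∑ m ∈ Finset.range (n + 1), (psi γ m : ℂ) *
          (((α / Δx ^ 2 : ℝ) : ℂ) *
              (u (n - m) (j + 1) l - 2 * u (n - m) j l + u (n - m) (j - 1) l)
            + ((β / Δy ^ 2 : ℝ) : ℂ) *
              (u (n - m) j (l + 1) - 2 * u (n - m) j l + u (n - m) j (l - 1))))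
      ↔
      σ ^ (n + 1) - σ ^ n +
        ((Δt ^ γ * (4 * α / Δx ^ 2 * Real.sin (kc * Δx / 2) ^ 2
            + 4 * β / Δy ^ 2 * Real.sin (kd * Δy / 2) ^ 2) : ℝ) : ℂ) *
          ∑ m ∈ Finset.range (n + 1), (psi γ m : ℂ) * σ ^ (n - m) = 0 := by
    intro j l
    have hjp : Complex.exp (Complex.I * (kc : ℂ) * ((j + 1 : ℤ) : ℂ) * (Δx : ℂ)) =
        Complex.exp (Complex.I * (kc : ℂ) * (j : ℂ) * (Δx : ℂ)) *
          Complex.exp (Complex.I * ((kc * Δx : ℝ) : ℂ)) := by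
      rw [← Complex.exp_add]; congr 1; push_cast; ring
    have hjm : Complex.exp (Complex.I * (kc : ℂ) * ((j - 1 : ℤ) : ℂ) * (Δx : ℂ)) =
        Complex.exp (Complex.I * (kc : ℂ) * (j : ℂ) * (Δx : ℂ)) *
          Complex.exp (-(Complex.I * ((kc * Δx : ℝ) : ℂ))) := by
      rw [← Complex.exp_add]; congr 1; push_cast; ring
    have hlp : Complex.exp (Complex.I * (kd : ℂ) * ((l + 1 : ℤ) : ℂ) * (Δy : ℂ)) =
        Complex.exp (Complex.I * (kd : ℂ) * (l : ℂ) * (Δy : ℂ)) *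
          Complex.exp (Complex.I * ((kd * Δy : ℝ) : ℂ)) := by
      rw [← Complex.exp_add]; congr 1; push_cast; ring
    have hlm : Complex.exp (Complex.I * (kd : ℂ) * ((l - 1 : ℤ) : ℂ) * (Δy : ℂ)) =
        Complex.exp (Complex.I * (kd : ℂ) * (l : ℂ) * (Δy : ℂ)) *
          Complex.exp (-(Complex.I * ((kd * Δy : ℝ) : ℂ))) := by
      rw [← Complex.exp_add]; congr 1; push_cast; ring
    have hx := exp_second_diff (kc * Δx)
    have hy := exp_second_diff (kd * Δy)
    have hsum : ∑ m ∈ Finset.range (n + 1), (psi γ m : ℂ) *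
          (((α / Δx ^ 2 : ℝ) : ℂ) *
              (u (n - m) (j + 1) l - 2 * u (n - m) j l + u (n - m) (j - 1) l)
            + ((β / Δy ^ 2 : ℝ) : ℂ) *
              (u (n - m) j (l + 1) - 2 * u (n - m) j l + u (n - m) j (l - 1)))
        = (((α / Δx ^ 2 : ℝ) : ℂ) * ((-(4 * Real.sin (kc * Δx / 2) ^ 2) : ℝ) : ℂ)
            + ((β / Δy ^ 2 : ℝ) : ℂ) * ((-(4 * Real.sin (kd * Δy / 2) ^ 2) : ℝ) : ℂ)) *
            Complex.exp (Complex.I * (kc : ℂ) * (j : ℂ) * (Δx : ℂ)) *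
            Complex.exp (Complex.I * (kd : ℂ) * (l : ℂ) * (Δy : ℂ)) *
          ∑ m ∈ Finset.range (n + 1), (psi γ m : ℂ) * σ ^ (n - m) := by
      rw [Finset.mul_sum]
      refine Finset.sum_congr rfl fun m _ => ?_
      simp only [hu, hjp, hjm, hlp, hlm]
      linear_combination
        ((psi γ m : ℂ) * σ ^ (n - m) *
            Complex.exp (Complex.I * (kc : ℂ) * (j : ℂ) * (Δx : ℂ)) *
            Complex.exp (Complex.I * (kd : ℂ) * (l : ℂ) * (Δy : ℂ)) *
            ((α / Δx ^ 2 : ℝ) : ℂ)) * hx +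
        ((psi γ m : ℂ) * σ ^ (n - m) *
            Complex.exp (Complex.I * (kc : ℂ) * (j : ℂ) * (Δx : ℂ)) *
            Complex.exp (Complex.I * (kd : ℂ) * (l : ℂ) * (Δy : ℂ)) *
            ((β / Δy ^ 2 : ℝ) : ℂ)) * hy
    rw [hsum]
    simp only [hu]
    have hEF : Complex.exp (Complex.I * (kc : ℂ) * (j : ℂ) * (Δx : ℂ)) *
        Complex.exp (Complex.I * (kd : ℂ) * (l : ℂ) * (Δy : ℂ)) ≠ 0 :=
      mul_ne_zero (Complex.exp_ne_zero _) (Complex.exp_ne_zero _)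
    constructor
    · intro h
      have h2 : (σ ^ (n + 1) - σ ^ n +
          ((Δt ^ γ * (4 * α / Δx ^ 2 * Real.sin (kc * Δx / 2) ^ 2
              + 4 * β / Δy ^ 2 * Real.sin (kd * Δy / 2) ^ 2) : ℝ) : ℂ) *
            ∑ m ∈ Finset.range (n + 1), (psi γ m : ℂ) * σ ^ (n - m)) *
          (Complex.exp (Complex.I * (kc : ℂ) * (j : ℂ) * (Δx : ℂ)) *
            Complex.exp (Complex.I * (kd : ℂ) * (l : ℂ) * (Δy : ℂ))) = 0 := by
        linear_combination (norm := (push_cast; ring1)) h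
      exact (mul_eq_zero.mp h2).resolve_right hEF
    · intro h
      linear_combination (norm := (push_cast; ring1))
        (Complex.exp (Complex.I * (kc : ℂ) * (j : ℂ) * (Δx : ℂ)) *
          Complex.exp (Complex.I * (kd : ℂ) * (l : ℂ) * (Δy : ℂ))) * h
  exact ⟨fun h => (key 0 0).mp (h 0 0), fun h j l => (key j l).mpr h⟩
end

section
/- Let γ be real with 0 < γ < 1, let α, β ≥ 0, let Δt, Δx, Δy be positive reals, and let n be a natural number. If Δt^γ (4α/Δx² + 4β/Δy²) · ∑_{m=0}^{n} (−1)^m ψ(γ, m) < 2, then for all real wavenumbers k_c, k_d, σ = −1 does not satisfy the amplification equation at step n; that is, (−1)^{n+1} − (−1)^n + Δt^γ ( (4α/Δx²) sin²(k_c Δx/2) + (4β/Δy²) sin²(k_d Δy/2) ) ∑_{m=0}^{n} ψ(γ, m) (−1)^{n−m} ≠ 0. -/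
open Finset Filter

theorem sigma_neg_one_excluded (γ α β : ℝ) (hγ0 : 0 < γ) (hγ1 : γ < 1)
    (hα : 0 ≤ α) (hβ : 0 ≤ β) (Δt Δx Δy : ℝ)
    (hΔt : 0 < Δt) (hΔx : 0 < Δx) (hΔy : 0 < Δy) (n : ℕ)
    (hbound : Δt ^ γ * (4 * α / Δx ^ 2 + 4 * β / Δy ^ 2) *
        ∑ m ∈ Finset.range (n + 1), (-1 : ℝ) ^ m * psi γ m < 2) :
    ∀ kc kd : ℝ,
      (-1 : ℝ) ^ (n + 1) - (-1 : ℝ) ^ n +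
        Δt ^ γ * (4 * α / Δx ^ 2 * Real.sin (kc * Δx / 2) ^ 2
            + 4 * β / Δy ^ 2 * Real.sin (kd * Δy / 2) ^ 2) *
          ∑ m ∈ Finset.range (n + 1), psi γ m * (-1 : ℝ) ^ (n - m) ≠ 0 := by
  intro kc kd
  set A : ℝ := ∑ m ∈ Finset.range (n+1), (-1:ℝ)^m * psi γ m with hA
  have hS : ∑ m ∈ Finset.range (n + 1), psi γ m * (-1 : ℝ) ^ (n - m)
      = (-1:ℝ)^n * A := by
    rw [hA, Finset.mul_sum]
    apply Finset.sum_congr rfl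
    intro m hm
    have hmn : m ≤ n := Nat.lt_succ_iff.mp (Finset.mem_range.mp hm)
    have h2 : (-1:ℝ)^(n-m) = (-1:ℝ)^n * (-1:ℝ)^m := by
      rw [← pow_add]
      have h3 : n + m = (n - m) + 2 * m := by omega
      rw [h3, pow_add, pow_mul, neg_one_sq, one_pow, mul_one]
    rw [h2]; ring
  rw [hS]
  set D : ℝ := Δt ^ γ * (4 * α / Δx ^ 2 * Real.sin (kc * Δx / 2) ^ 2
      + 4 * β / Δy ^ 2 * Real.sin (kd * Δy / 2) ^ 2) with hD
  have htγ : (0:ℝ) ≤ Δt ^ γ := Real.rpow_nonneg hΔt.le γ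
  have hD0 : 0 ≤ D := by
    apply mul_nonneg htγ
    positivity
  have hDle : D ≤ Δt ^ γ * (4 * α / Δx ^ 2 + 4 * β / Δy ^ 2) := by
    apply mul_le_mul_of_nonneg_left _ htγ
    have h1 : Real.sin (kc * Δx / 2) ^ 2 ≤ 1 := Real.sin_sq_le_one _
    have h2 : Real.sin (kd * Δy / 2) ^ 2 ≤ 1 := Real.sin_sq_le_one _
    have ha : (0:ℝ) ≤ 4 * α / Δx ^ 2 := by positivity
    have hb : (0:ℝ) ≤ 4 * β / Δy ^ 2 := by positivity
    nlinarith
  have hDA : D * A < 2 := by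
    rcases le_or_gt 0 A with h | h
    · calc D * A ≤ Δt ^ γ * (4 * α / Δx ^ 2 + 4 * β / Δy ^ 2) * A :=
            mul_le_mul_of_nonneg_right hDle h
        _ < 2 := hbound
    · nlinarith
  have hne : (-1:ℝ)^n ≠ 0 := pow_ne_zero n (by norm_num)
  have hfac : (-1:ℝ)^(n+1) - (-1:ℝ)^n + D * ((-1:ℝ)^n * A)
      = (-1:ℝ)^n * (D * A - 2) := by
    rw [pow_succ]; ring
  rw [hfac]
  exact mul_ne_zero hne (by linarith)
end

section
/- Let γ > 0 be real, let α, β be positive reals, let Δt, Δx, Δy be positive reals, let n be a natural number, and let k_c, k_d be real wavenumbers. If σ = 1 satisfies the amplification equation at step n, namely 1^{n+1} − 1^n + Δt^γ ( (4α/Δx²) sin²(k_c Δx/2) + (4β/Δy²) sin²(k_d Δy/2) ) ∑_{m=0}^{n} ψ(γ, m) = 0, then sin(k_c Δx/2) = 0 and sin(k_d Δy/2) = 0. -/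
open Finset Filter

lemma alt_desc_pos (γ : ℝ) (hγ : 0 < γ) (n : ℕ) :
    0 < (-1) ^ n * (descPochhammer ℝ n).eval (-γ) := by
  induction n with
  | zero => simp
  | succ n ih =>
    rw [descPochhammer_succ_eval]
    have : (-1 : ℝ) ^ (n + 1) * ((descPochhammer ℝ n).eval (-γ) * (-γ - n))
        = ((-1) ^ n * (descPochhammer ℝ n).eval (-γ)) * (γ + n) := by ring
    rw [this]
    have : (0:ℝ) < γ + n := by positivity
    exact mul_pos ih this

theorem sigma_one_forces_zero_wavenumbers (γ α β : ℝ) (hγ : 0 < γ)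
    (hα : 0 < α) (hβ : 0 < β) (Δt Δx Δy : ℝ)
    (hΔt : 0 < Δt) (hΔx : 0 < Δx) (hΔy : 0 < Δy) (n : ℕ) (kc kd : ℝ)
    (heq : (1 : ℝ) ^ (n + 1) - (1 : ℝ) ^ n +
        Δt ^ γ * (4 * α / Δx ^ 2 * Real.sin (kc * Δx / 2) ^ 2
            + 4 * β / Δy ^ 2 * Real.sin (kd * Δy / 2) ^ 2) *
          ∑ m ∈ Finset.range (n + 1), psi γ m = 0) :
    Real.sin (kc * Δx / 2) = 0 ∧ Real.sin (kd * Δy / 2) = 0 := by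
  have hS : 0 < ∑ m ∈ Finset.range (n + 1), psi γ m := by
    rw [psi_sum_eq]
    have := alt_desc_pos γ hγ n
    have hf : (0:ℝ) < n.factorial := by positivity
    positivity
  have hΔtγ : 0 < Δt ^ γ := Real.rpow_pos_of_pos hΔt γ
  have h1 : (0:ℝ) ≤ 4 * α / Δx ^ 2 * Real.sin (kc * Δx / 2) ^ 2 := by positivity
  have h2 : (0:ℝ) ≤ 4 * β / Δy ^ 2 * Real.sin (kd * Δy / 2) ^ 2 := by positivity
  have hc : 4 * α / Δx ^ 2 * Real.sin (kc * Δx / 2) ^ 2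
      + 4 * β / Δy ^ 2 * Real.sin (kd * Δy / 2) ^ 2 = 0 := by
    simp only [one_pow] at heq
    have hprod : Δt ^ γ * (4 * α / Δx ^ 2 * Real.sin (kc * Δx / 2) ^ 2
        + 4 * β / Δy ^ 2 * Real.sin (kd * Δy / 2) ^ 2) *
        ∑ m ∈ Finset.range (n + 1), psi γ m = 0 := by linarith
    rcases mul_eq_zero.mp hprod with h | h
    · rcases mul_eq_zero.mp h with h' | h'
      · exact absurd h' (ne_of_gt hΔtγ)
      · exact h'
    · exact absurd h (ne_of_gt hS)
  have hA : 4 * α / Δx ^ 2 * Real.sin (kc * Δx / 2) ^ 2 = 0 := by linarith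
  have hB : 4 * β / Δy ^ 2 * Real.sin (kd * Δy / 2) ^ 2 = 0 := by linarith
  constructor
  · have h4 : (0:ℝ) < 4 * α / Δx ^ 2 := by positivity
    have := (mul_eq_zero.mp hA).resolve_left (ne_of_gt h4)
    exact pow_eq_zero_iff (by norm_num) |>.mp this
  · have h4 : (0:ℝ) < 4 * β / Δy ^ 2 := by positivity
    have := (mul_eq_zero.mp hB).resolve_left (ne_of_gt h4)
    exact pow_eq_zero_iff (by norm_num) |>.mp this
end
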